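/- arXiv:2503.21078 — 5 statements merged into one kernel-verified Lean document; each statement's English description precedes it below -/
import Mathlib

section
/- Let u, v, h be smooth functions of t near t0 with Taylor coefficients u_k, v_k, h_k at t0, and suppose v'(t) = h(t)·u'(t) near t0. Then for every k ≥ 1, v_k = (1/k)·∑_{i=1}^{k} i·u_i·h_{k−i}. -/
/-!
Since `k v_k` is the `(k-1)`-st Taylor coefficient of `v' = u' h`, Leibniz' rule makes it the
Cauchy product `∑ (u')_i h_{k-1-i}`, and `(u')_i = (i+1) u_{i+1}`.
-/

open Finset Filter Topology Nat

section TaylorCoeff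

variable {𝕜 : Type*} [NontriviallyNormedField 𝕜] [CharZero 𝕜]

noncomputable def taylorCoeff (f : 𝕜 → 𝕜) (x : 𝕜) (k : ℕ) : 𝕜 := iteratedDeriv k f x / k !

omit [CharZero 𝕜] in
theorem taylorCoeff_congr {f g : 𝕜 → 𝕜} {x : 𝕜} (hfg : f =ᶠ[𝓝 x] g) (k : ℕ) :
    taylorCoeff f x k = taylorCoeff g x k := by
  rw [taylorCoeff, taylorCoeff, hfg.iteratedDeriv_eq]

theorem taylorCoeff_deriv (f : 𝕜 → 𝕜) (x : 𝕜) (k : ℕ) :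
    taylorCoeff (deriv f) x k = (k + 1) * taylorCoeff f x (k + 1) := by
  simp only [taylorCoeff, ← iteratedDeriv_succ', factorial_succ, cast_mul]
  field_simp
  push_cast
  ring

theorem taylorCoeff_mul {n : ℕ} {f g : 𝕜 → 𝕜} {x : 𝕜} (hf : ContDiffAt 𝕜 n f x)
    (hg : ContDiffAt 𝕜 n g x) :
    taylorCoeff (fun y => f y * g y) x n =
      ∑ i ∈ range (n + 1), taylorCoeff f x i * taylorCoeff g x (n - i) := by
  simp only [taylorCoeff, iteratedDeriv_fun_mul hf hg, sum_div]
  refine sum_congr rfl fun i hi => ?_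
  have : (n ! : 𝕜) ≠ 0 := by exact_mod_cast factorial_ne_zero n
  rw [cast_choose 𝕜 (mem_range_succ_iff.1 hi)]
  field_simp

theorem taylorCoeff_succ_of_deriv_eq_deriv_mul {n : ℕ} {u v h : 𝕜 → 𝕜} {x : 𝕜}
    (hu : ContDiffAt 𝕜 (n + 1) u x) (hh : ContDiffAt 𝕜 n h x)
    (hrel : deriv v =ᶠ[𝓝 x] fun t => deriv u t * h t) :
    taylorCoeff v x (n + 1) =
      (n + 1 : 𝕜)⁻¹ * ∑ i ∈ range (n + 1),
        (i + 1) * taylorCoeff u x (i + 1) * taylorCoeff h x (n - i) := by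
  have hv : (n + 1 : 𝕜) * taylorCoeff v x (n + 1) = taylorCoeff (deriv v) x n :=
    (taylorCoeff_deriv v x n).symm
  rw [taylorCoeff_congr hrel, taylorCoeff_mul (hu.derivWithin le_rfl) hh] at hv
  simp only [taylorCoeff_deriv] at hv
  rw [← hv, inv_mul_cancel_left₀ (by exact_mod_cast succ_ne_zero n)]

end TaylorCoeff

theorem subODE_recurrence_general (t0 : ℝ) (u v h : ℝ → ℝ)
    (hu : ContDiffAt ℝ (⊤ : ℕ∞) u t0)
    (hh : ContDiffAt ℝ (⊤ : ℕ∞) h t0)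
    (hrel : ∀ᶠ t in nhds t0, deriv v t = h t * deriv u t) :
    ∀ k : ℕ, 1 ≤ k →
      iteratedDeriv k v t0 / (k.factorial : ℝ) =
        (1 / (k : ℝ)) * ∑ i ∈ Finset.Icc 1 k,
          (i : ℝ) * (iteratedDeriv i u t0 / (i.factorial : ℝ)) *
            (iteratedDeriv (k - i) h t0 / ((k - i).factorial : ℝ)) := by
  intro k hk
  obtain ⟨n, rfl⟩ := Nat.exists_eq_add_of_le' hk
  have hrel' : deriv v =ᶠ[𝓝 t0] fun t => deriv u t * h t := by
    filter_upwards [hrel] with t ht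
    rw [ht, mul_comm]
  change taylorCoeff v t0 (n + 1) =
    _ * ∑ i ∈ Icc 1 (n + 1), i * taylorCoeff u t0 i * taylorCoeff h t0 (n + 1 - i)
  rw [taylorCoeff_succ_of_deriv_eq_deriv_mul (hu.of_le (by exact_mod_cast le_top))
    (hh.of_le (by exact_mod_cast le_top)) hrel', one_div, ← Ico_add_one_right_eq_Icc,
    sum_Ico_eq_sum_range]
  push_cast
  congr 1
  refine sum_congr rfl fun i _ => ?_
  rw [add_comm 1 i, add_comm 1 (i : ℝ), Nat.add_sub_add_right]

/-- The sub-ODE recurrence: if v' = h·u' near t0 then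
v_k = (1/k) ∑_{i=1}^k i u_i h_{k-i} for k ≥ 1. -/
theorem subODE_recurrence (t0 : ℝ) (u v h : ℝ → ℝ)
    (hu : ContDiffAt ℝ (⊤ : ℕ∞) u t0) (hv : ContDiffAt ℝ (⊤ : ℕ∞) v t0)
    (hh : ContDiffAt ℝ (⊤ : ℕ∞) h t0)
    (hrel : ∀ᶠ t in nhds t0, deriv v t = h t * deriv u t) :
    ∀ k : ℕ, 1 ≤ k →
      iteratedDeriv k v t0 / (k.factorial : ℝ) =
        (1 / (k : ℝ)) * ∑ i ∈ Finset.Icc 1 k,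
          (i : ℝ) * (iteratedDeriv i u t0 / (i.factorial : ℝ)) *
            (iteratedDeriv (k - i) h t0 / ((k - i).factorial : ℝ)) :=
  subODE_recurrence_general t0 u v h hu hh hrel
end

section
/- Let Σ be an n×n matrix over ℤ ∪ {−∞} with weakly valid offsets (c, d), i.e. d_j − c_i ≥ Σ_{ij} for all i, j. Let J be an n×n real matrix such that J_{ij} = 0 whenever d_j − c_i > Σ_{ij}. If det J ≠ 0, then equality d_j − c_i = Σ_{ij} holds on some transversal, i.e. the offsets are valid. -/
theorem Matrix.exists_perm_forall_ne_zero_of_det_ne_zero {n R : Type*} [Fintype n] [DecidableEq n]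
    [CommRing R] {A : Matrix n n R} (hA : A.det ≠ 0) :
    ∃ σ : Equiv.Perm n, ∀ i, A i (σ i) ≠ 0 := by
  rw [← Matrix.det_transpose, Matrix.det_apply] at hA
  obtain ⟨σ, -, hσ⟩ := Finset.exists_ne_zero_of_sum_ne_zero hA
  exact ⟨σ, fun i hi => hσ (by rw [Finset.prod_eq_zero (Finset.mem_univ i) hi, smul_zero])⟩

/-- Lemma B.1: weakly valid offsets giving a nonsingular system Jacobian are valid. -/
theorem weakly_valid_nonsingular_implies_valid (n : ℕ)
    (S : Fin n → Fin n → WithBot ℤ) (c d : Fin n → ℤ)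
    (hweak : ∀ i j, S i j ≤ ((d j - c i : ℤ) : WithBot ℤ))
    (J : Matrix (Fin n) (Fin n) ℝ)
    (hJ : ∀ i j, S i j < ((d j - c i : ℤ) : WithBot ℤ) → J i j = 0)
    (hdet : J.det ≠ 0) :
    ∃ σ : Equiv.Perm (Fin n), ∀ i, S i (σ i) = ((d (σ i) - c i : ℤ) : WithBot ℤ) := by
  obtain ⟨σ, hσ⟩ := J.exists_perm_forall_ne_zero_of_det_ne_zero hdet
  exact ⟨σ, fun i => (hweak i (σ i)).eq_of_not_lt fun hlt => hσ i (hJ i (σ i) hlt)⟩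
end

section
/- Let Σ be an n×n matrix over ℤ ∪ {−∞} with valid offsets (c, d), and for a fixed row r define Σ* by Σ*_{rj} = Σ_{rj} + 1 (with −∞ + 1 = −∞) and Σ*_{ij} = Σ_{ij} for i ≠ r. Define (c*, d*) by c*_r = c_r − 1, c*_i = c_i otherwise, then if c*_r = −1 add 1 to all entries of c* and d*. Then (c*, d*) is a valid offset pair for Σ*, and Σ and Σ* have exactly the same set of highest-value transversals. -/
/-- Increment row r of a signature matrix by 1 (with −∞ + 1 = −∞). -/
def rowInc (n : ℕ) (r : Fin n) (S : Fin n → Fin n → WithBot ℤ) :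
    Fin n → Fin n → WithBot ℤ :=
  fun i j => if i = r then S i j + 1 else S i j

/-- Offsets (c,d) are valid for S: weak validity with equality on some transversal. -/
def IsValidOffsets (n : ℕ) (S : Fin n → Fin n → WithBot ℤ) (c d : Fin n → ℤ) : Prop :=
  (∀ i j, S i j ≤ ((d j - c i : ℤ) : WithBot ℤ)) ∧
    ∃ σ : Equiv.Perm (Fin n), ∀ i, S i (σ i) = ((d (σ i) - c i : ℤ) : WithBot ℤ)

/-- σ is a highest-value transversal of S. -/
def IsHVT (n : ℕ) (S : Fin n → Fin n → WithBot ℤ) (σ : Equiv.Perm (Fin n)) : Prop :=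
  ∀ τ : Equiv.Perm (Fin n), ∑ i, S i (τ i) ≤ ∑ i, S i (σ i)

/-!
Incrementing row `r` adds the row vector `e = 𝟙_{r}` to the matrix. Adding any integer row
vector `e` keeps `(c - e, d)` valid, since `d j - (c i - e i) = (d j - c i) + e i`, and adds the
constant `∑ e` to the value of every transversal, so it does not change which ones are highest.
The final normalisation adds the same constant to all offsets, which leaves every `d j - c i`
unchanged.
-/

section

variable {n : ℕ} {S : Fin n → Fin n → WithBot ℤ} {c d : Fin n → ℤ}

lemma rowInc_eq_add_row (r : Fin n) (S : Fin n → Fin n → WithBot ℤ) :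
    rowInc n r S = fun i j => S i j + ((if i = r then 1 else 0 : ℤ) : WithBot ℤ) := by
  funext i j
  by_cases hi : i = r <;> simp [rowInc, hi]

lemma IsValidOffsets.add_row (h : IsValidOffsets n S c d) (e : Fin n → ℤ) :
    IsValidOffsets n (fun i j => S i j + e i) (fun i => c i - e i) d := by
  obtain ⟨hle, σ, hσ⟩ := h
  have hcoe : ∀ i j, ((d j - (c i - e i) : ℤ) : WithBot ℤ) = ((d j - c i : ℤ) : WithBot ℤ) + e i :=
    fun i j => by rw [← WithBot.coe_add, sub_sub_eq_add_sub, add_sub_right_comm]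
  refine ⟨fun i j => ?_, σ, fun i => ?_⟩
  · rw [hcoe]
    exact add_le_add_left (hle i j) _
  · show S i (σ i) + e i = _
    rw [hcoe, hσ i]

lemma IsValidOffsets.add_const (h : IsValidOffsets n S c d) (k : ℤ) :
    IsValidOffsets n S (fun i => c i + k) (fun j => d j + k) := by
  simpa only [IsValidOffsets, add_sub_add_right_eq_sub] using h

lemma IsValidOffsets.rowInc (h : IsValidOffsets n S c d) (r : Fin n) :
    IsValidOffsets n (rowInc n r S) (fun i => if i = r then c i - 1 else c i) d := by
  have hc : (fun i => if i = r then c i - 1 else c i)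
      = fun i => c i - (if i = r then 1 else 0) := by
    funext i
    split_ifs <;> simp
  rw [rowInc_eq_add_row, hc]
  exact h.add_row _

lemma sum_transversal_add_row (S : Fin n → Fin n → WithBot ℤ) (e : Fin n → ℤ)
    (τ : Equiv.Perm (Fin n)) :
    ∑ i, (S i (τ i) + e i) = ∑ i, S i (τ i) + ((∑ i, e i : ℤ) : WithBot ℤ) := by
  rw [Finset.sum_add_distrib, WithBot.coe_sum]

lemma isHVT_add_row_iff (S : Fin n → Fin n → WithBot ℤ) (e : Fin n → ℤ)
    (σ : Equiv.Perm (Fin n)) :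
    IsHVT n (fun i j => S i j + e i) σ ↔ IsHVT n S σ := by
  simp only [IsHVT, sum_transversal_add_row,
    WithBot.add_le_add_iff_right WithBot.coe_ne_bot]

lemma isHVT_rowInc_iff (r : Fin n) (S : Fin n → Fin n → WithBot ℤ) (σ : Equiv.Perm (Fin n)) :
    IsHVT n (rowInc n r S) σ ↔ IsHVT n S σ := by
  rw [rowInc_eq_add_row]
  exact isHVT_add_row_iff S _ σ

end

/-- Lemma 3.3 (i)-(ii): differentiating one equation preserves valid offsets (after the
offset update) and leaves the set of HVTs unchanged. -/
theorem rowInc_offsets_valid_and_same_HVTs (n : ℕ) (r : Fin n)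
    (S : Fin n → Fin n → WithBot ℤ) (c d : Fin n → ℤ)
    (hvalid : IsValidOffsets n S c d) :
    (IsValidOffsets n (rowInc n r S)
        (fun i => (if i = r then c i - 1 else c i) + (if c r - 1 = -1 then 1 else 0))
        (fun j => d j + (if c r - 1 = -1 then 1 else 0))) ∧
      ∀ σ : Equiv.Perm (Fin n), IsHVT n S σ ↔ IsHVT n (rowInc n r S) σ :=
  ⟨(hvalid.rowInc r).add_const _, fun σ => (isHVT_rowInc_iff r S σ).symm⟩
end

section
/- Let g : ℝ^N → ℝ be smooth, and along a smooth path x : ℝ → ℝ^n let G(t) = g applied to the tuple of derivatives (x_j^{(d)}(t)) for j = 1..n, d = 0..D. Suppose for some j the highest derivative of x_j on which g actually depends is order d (g is independent of x_j^{(e)} for e > d). Then the partial derivative of the function defining Ġ(t) = dG/dt with respect to the variable x_j^{(d+1)} equals ∂g/∂x_j^{(d)}. -/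
/-!
With `R z = (z (i, e.castSucc))` (forget the top order) and `S z = (z (i, e.succ))` (shift orders
by one), the total derivative is `ġ z = Dg (R z) (S z)`, so its derivative in direction `v` is
`D²g (R y) (R v) (S y) + Dg (R y) (S v)`. For `v = e_(j,d+1)`, `R v` is a direction in which `g` is
constant, so the first term vanishes by symmetry of `D²g`, and `S v = e_(j,d)`.
-/

open ContinuousLinearMap

section LinearForms

variable {ι R F : Type*} [Fintype ι] [DecidableEq ι] [CommSemiring R]
  [FunLike F (ι → R) R] [LinearMapClass F R (ι → R) R]

theorem sum_apply_single_mul_eq (L : F) (x : ι → R) :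
    ∑ i, L (Pi.single i 1) * x i = L x := by
  conv_rhs => rw [pi_eq_sum_univ' x]
  simp [map_sum, map_smul, mul_comm]

theorem apply_eq_zero_of_apply_single_eq_zero (L : F) {x : ι → R}
    (hL : ∀ i, x i ≠ 0 → L (Pi.single i 1) = 0) : L x = 0 := by
  rw [← sum_apply_single_mul_eq]
  refine Finset.sum_eq_zero fun i _ => ?_
  by_cases hx : x i = 0
  · rw [hx, mul_zero]
  · rw [hL i hx, zero_mul]

end LinearForms

section SecondDerivative

variable {E F G : Type*} [NormedAddCommGroup E] [NormedSpace ℝ E]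
  [NormedAddCommGroup F] [NormedSpace ℝ F] [NormedAddCommGroup G] [NormedSpace ℝ G]
  {g : F → G}

theorem fderiv_fderiv_apply_eq_zero_of_fderiv_apply_eq_zero (hg : ContDiff ℝ 2 g) {w : F}
    (hw : ∀ x, fderiv ℝ g x w = 0) (x u : F) : fderiv ℝ (fderiv ℝ g) x w u = 0 := by
  have hdiff : DifferentiableAt ℝ (fderiv ℝ g) x :=
    (hg.fderiv_right one_add_one_eq_two.le).differentiable one_ne_zero x
  rw [hg.contDiffAt.isSymmSndFDerivAt (by simp) w u]
  have hdir : fderiv ℝ (fun x => fderiv ℝ g x w) x u = fderiv ℝ (fderiv ℝ g) x u w := by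
    rw [fderiv_clm_apply hdiff (differentiableAt_const w)]
    simp
  rw [← hdir, funext hw, fderiv_const_apply, zero_apply]

theorem fderiv_fderiv_comp_apply_comp (hg : ContDiff ℝ 2 g) (R S : E →L[ℝ] F) (y v : E) :
    fderiv ℝ (fun z => fderiv ℝ g (R z) (S z)) y v =
      fderiv ℝ (fderiv ℝ g) (R y) (R v) (S y) + fderiv ℝ g (R y) (S v) := by
  have hdiff : DifferentiableAt ℝ (fderiv ℝ g) (R y) :=
    (hg.fderiv_right one_add_one_eq_two.le).differentiable one_ne_zero _
  have hderiv : HasFDerivAt (fun z => fderiv ℝ g (R z) (S z)) _ y :=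
    (hdiff.hasFDerivAt.comp y R.hasFDerivAt).clm_apply S.hasFDerivAt
  rw [hderiv.fderiv]
  simp [add_comm]

end SecondDerivative

/-- Griewank's Lemma: viewing the total time-derivative ġ of
g(x, ẋ, …, x^{(D)}) as a function of the derivatives x_j^{(e)}, e ≤ D+1,
treated as independent variables, if g does not depend on derivatives of x_j of
order above d, then ∂ġ/∂x_j^{(d+1)} = ∂g/∂x_j^{(d)}. -/
theorem griewank_lemma (n D : ℕ)
    (g : ((Fin n) × (Fin (D + 1)) → ℝ) → ℝ) (hg : ContDiff ℝ (⊤ : ℕ∞) g)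
    (j : Fin n) (d : Fin (D + 1))
    (hind : ∀ (x : (Fin n) × (Fin (D + 1)) → ℝ) (e : Fin (D + 1)), d < e →
      fderiv ℝ g x (Pi.single (j, e) 1) = 0) :
    ∀ y : (Fin n) × (Fin (D + 2)) → ℝ,
      fderiv ℝ
        (fun z : (Fin n) × (Fin (D + 2)) → ℝ =>
          ∑ p : (Fin n) × (Fin (D + 1)),
            fderiv ℝ g (fun q => z (q.1, q.2.castSucc)) (Pi.single p 1) *
              z (p.1, p.2.succ))
        y (Pi.single (j, d.succ) 1)
      = fderiv ℝ g (fun q => y (q.1, q.2.castSucc)) (Pi.single (j, d) 1) := by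
  intro y
  let R := (LinearMap.funLeft ℝ ℝ
    fun q : Fin n × Fin (D + 1) => (q.1, q.2.castSucc)).toContinuousLinearMap
  let S := (LinearMap.funLeft ℝ ℝ
    fun q : Fin n × Fin (D + 1) => (q.1, q.2.succ)).toContinuousLinearMap
  have hg2 : ContDiff ℝ 2 g := contDiff_infty.mp hg 2
  have htotal : (fun z : Fin n × Fin (D + 2) → ℝ => ∑ p : Fin n × Fin (D + 1),
      fderiv ℝ g (fun q => z (q.1, q.2.castSucc)) (Pi.single p 1) * z (p.1, p.2.succ)) =
      fun z => fderiv ℝ g (R z) (S z) :=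
    funext fun z => sum_apply_single_mul_eq _ (S z)
  have hR : ∀ x, fderiv ℝ g x (R (Pi.single (j, d.succ) 1)) = 0 := by
    refine fun x => apply_eq_zero_of_apply_single_eq_zero _ fun ⟨i, e⟩ hq => ?_
    have hie : (i, e.castSucc) = (j, d.succ) := by
      by_contra hne
      exact hq (Pi.single_eq_of_ne hne 1)
    obtain ⟨rfl, he⟩ := Prod.mk.inj hie
    exact hind x e (Fin.castSucc_lt_castSucc_iff.mp (he ▸ Fin.castSucc_lt_succ))
  have hS : S (Pi.single (j, d.succ) 1) = Pi.single (j, d) 1 := by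
    funext ⟨i, e⟩
    simp [S, Pi.single_apply, Prod.ext_iff]
  rw [htotal, fderiv_fderiv_comp_apply_comp hg2,
    fderiv_fderiv_apply_eq_zero_of_fderiv_apply_eq_zero hg2 hR, zero_add, hS]
  rfl
end

section
/- Define sequences (x_k), (u_k), (x̂_k) by: x_0 given, u_0 = −x_0, x̂_0 = exp(u_0); and for k ≥ 1, x_k = x̂_{k−1}/k, u_k = −x_k, x̂_k = (1/k)·∑_{i=1}^{k} i·u_i·x̂_{k−i}. Then (x_k) are exactly the Taylor coefficients at t0 of the solution x(t) of the IVP ẋ = e^{−x}, x(t0) = x_0; moreover u_k and x̂_k are the Taylor coefficients of −x(t) and of e^{−x(t)} respectively. -/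
/-! Since `d/dt e^x = e^x · e^{-x} = 1`, the solution is explicit: `e^{-x(t)} = 1 / (e^{x₀} + t - t₀)`,
whose Taylor coefficients at `t₀` are `q (-q)^k` with `q = e^{-x₀}`. On the recurrence side,
`i u_i = -x̂_{i-1}` turns the rule for `x̂_k` into `x̂_k = -(1/k) ∑ x̂_{i-1} x̂_{k-i}`, which `q (-q)^k`
satisfies because each of its `k` terms equals `q² (-q)^{k-1}`. Finally `x_k = x̂_{k-1} / k` is
termwise integration of the Taylor series of `ẋ = e^{-x}`. -/

open Finset Filter Topology

theorem eq_mul_neg_pow_of_sum_recurrence {K : Type*} [Field K] [CharZero K] {V : ℕ → K} {q : K}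
    (h0 : V 0 = q)
    (hV : ∀ k, 1 ≤ k → V k = -(1 / (k : K)) * ∑ i ∈ Icc 1 k, V (i - 1) * V (k - i)) :
    ∀ k, V k = q * (-q) ^ k := by
  intro k
  induction k using Nat.strong_induction_on with
  | _ k ih =>
    rcases k with _ | m
    · simpa using h0
    have hterm : ∀ i ∈ Icc 1 (m + 1), V (i - 1) * V (m + 1 - i) = q * (q * (-q) ^ m) := by
      intro i hi
      obtain ⟨hi1, hi2⟩ := mem_Icc.mp hi
      rw [ih (i - 1) (by omega), ih (m + 1 - i) (by omega)]
      calc q * (-q) ^ (i - 1) * (q * (-q) ^ (m + 1 - i))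
          = q * (q * (-q) ^ (i - 1 + (m + 1 - i))) := by ring
        _ = q * (q * (-q) ^ m) := by congr 3; omega
    rw [hV (m + 1) (by omega), sum_congr rfl hterm, sum_const, Nat.card_Icc, nsmul_eq_mul]
    field_simp
    push_cast
    ring

theorem eq_mul_neg_pow_of_exp_neg_recurrence {K : Type*} [Field K] [CharZero K]
    {X U V : ℕ → K} {q : K} (h0 : V 0 = q) (hX : ∀ k, 1 ≤ k → X k = V (k - 1) / k)
    (hU : ∀ k, 1 ≤ k → U k = -X k)
    (hV : ∀ k, 1 ≤ k → V k = (1 / (k : K)) * ∑ i ∈ Icc 1 k, (i : K) * U i * V (k - i)) :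
    ∀ k, V k = q * (-q) ^ k := by
  refine eq_mul_neg_pow_of_sum_recurrence h0 fun k hk => ?_
  have hterm : ∀ i ∈ Icc 1 k, (i : K) * U i * V (k - i) = -(V (i - 1) * V (k - i)) := by
    intro i hi
    have hi1 := (mem_Icc.mp hi).1
    have : (i : K) ≠ 0 := Nat.cast_ne_zero.mpr (by omega)
    rw [hU i hi1, hX i hi1]
    field_simp
  rw [hV k hk, sum_congr rfl hterm, sum_neg_distrib]
  ring

theorem iteratedDeriv_inv_add_const_div_factorial {𝕜 : Type*} [NontriviallyNormedField 𝕜]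
    [CharZero 𝕜] (b t : 𝕜) (k : ℕ) :
    iteratedDeriv k (fun s => (s + b)⁻¹) t / k.factorial = (t + b)⁻¹ * (-(t + b)⁻¹) ^ k := by
  rw [iteratedDeriv_comp_add_const k Inv.inv b, iteratedDeriv_eq_iterate]
  beta_reduce
  rw [iter_deriv_inv, show (-1 - k : ℤ) = -(k + 1 : ℕ) by push_cast; ring, zpow_neg, zpow_natCast,
    mul_div_right_comm, mul_div_cancel_right₀ _ (Nat.cast_ne_zero.mpr k.factorial_ne_zero)]
  generalize t + b = y
  ring

theorem iteratedDeriv_succ_div_factorial_of_deriv_eventuallyEq {𝕜 : Type*}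
    [NontriviallyNormedField 𝕜] {f g : 𝕜 → 𝕜} {t : 𝕜} (h : deriv f =ᶠ[𝓝 t] g) (k : ℕ) :
    iteratedDeriv (k + 1) f t / (k + 1).factorial =
      iteratedDeriv k g t / k.factorial / (k + 1 : ℕ) := by
  rw [iteratedDeriv_succ', h.iteratedDeriv_eq, Nat.factorial_succ, Nat.cast_mul, div_div,
    mul_comm]

theorem exp_eq_of_hasDerivAt_exp_neg {x : ℝ → ℝ} {s : Set ℝ} (hs : IsOpen s)
    (hs' : IsPreconnected s) (hx : ∀ t ∈ s, HasDerivAt x (Real.exp (-x t)) t) {t0 : ℝ}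
    (ht0 : t0 ∈ s) : Set.EqOn (fun t => Real.exp (x t)) (fun t => t + (Real.exp (x t0) - t0)) s := by
  have hexp : ∀ t ∈ s, HasDerivAt (fun t => Real.exp (x t)) 1 t := fun t ht => by
    simpa [← Real.exp_add] using (hx t ht).exp
  have hlin : ∀ t, HasDerivAt (fun t => t + (Real.exp (x t0) - t0)) 1 t := fun t =>
    (hasDerivAt_id t).add_const _
  refine hs.eqOn_of_deriv_eq hs' (fun t ht => (hexp t ht).differentiableAt.differentiableWithinAt)
    (fun t _ => (hlin t).differentiableAt.differentiableWithinAt)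
    (fun t ht => by rw [(hexp t ht).deriv, (hlin t).deriv]) ht0 (by ring)

/-- The recurrence produced by inserting the exp sub-ODE into ẋ = e^{−x} computes
exactly the Taylor coefficients of x, −x, and e^{−x} at t0. -/
theorem subODE_recurrence_exp_neg (t0 x0 : ℝ) (x : ℝ → ℝ)
    (hx : ∀ t ∈ Set.Ioi (t0 - Real.exp x0), HasDerivAt x (Real.exp (-(x t))) t)
    (hx0 : x t0 = x0)
    (X U V : ℕ → ℝ)
    (hX0 : X 0 = x0) (hU0 : U 0 = -x0) (hV0 : V 0 = Real.exp (U 0))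
    (hX : ∀ k : ℕ, 1 ≤ k → X k = V (k - 1) / (k : ℝ))
    (hU : ∀ k : ℕ, 1 ≤ k → U k = -X k)
    (hV : ∀ k : ℕ, 1 ≤ k →
      V k = (1 / (k : ℝ)) * ∑ i ∈ Finset.Icc 1 k, (i : ℝ) * U i * V (k - i)) :
    ∀ k : ℕ,
      X k = iteratedDeriv k x t0 / (k.factorial : ℝ) ∧
      U k = iteratedDeriv k (fun t => -x t) t0 / (k.factorial : ℝ) ∧
      V k = iteratedDeriv k (fun t => Real.exp (-(x t))) t0 / (k.factorial : ℝ) := by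
  have ht0 : t0 ∈ Set.Ioi (t0 - Real.exp x0) := sub_lt_self t0 (Real.exp_pos x0)
  have hnhds : Set.Ioi (t0 - Real.exp x0) ∈ 𝓝 t0 := isOpen_Ioi.mem_nhds ht0
  have hsol : Set.EqOn (fun t => Real.exp (-x t)) (fun t => (t + (Real.exp x0 - t0))⁻¹)
      (Set.Ioi (t0 - Real.exp x0)) := fun t ht => by
    dsimp only
    rw [Real.exp_neg, ← hx0]
    exact congrArg Inv.inv (exp_eq_of_hasDerivAt_exp_neg isOpen_Ioi isPreconnected_Ioi hx ht0 ht)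
  have hV_taylor (k : ℕ) : iteratedDeriv k (fun t => Real.exp (-x t)) t0 / k.factorial =
      Real.exp (-x0) * (-Real.exp (-x0)) ^ k := by
    rw [(eventuallyEq_of_mem hnhds hsol).iteratedDeriv_eq,
      iteratedDeriv_inv_add_const_div_factorial, add_sub_cancel, ← Real.exp_neg]
  have hV_rec : ∀ k, V k = Real.exp (-x0) * (-Real.exp (-x0)) ^ k :=
    eq_mul_neg_pow_of_exp_neg_recurrence (by rw [hV0, hU0]) hX hU hV
  have hX_taylor : ∀ k, X k = iteratedDeriv k x t0 / k.factorial := by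
    rintro (_ | k)
    · simp [hX0, hx0]
    · rw [hX (k + 1) (by omega), iteratedDeriv_succ_div_factorial_of_deriv_eventuallyEq
        (eventuallyEq_of_mem hnhds fun t ht => (hx t ht).deriv), hV_taylor, ← hV_rec]
      rfl
  have hUX (k : ℕ) : U k = -X k := by
    rcases k with _ | k
    · rw [hU0, hX0]
    · exact hU (k + 1) (by omega)
  intro k
  refine ⟨hX_taylor k, ?_, (hV_rec k).trans (hV_taylor k).symm⟩
  rw [hUX, hX_taylor, show (fun t => -x t) = -x from rfl, iteratedDeriv_neg, neg_div]
end
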